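/- arXiv:2503.18659 — 3 statements merged into one kernel-verified Lean document; each statement's English description precedes it below -/
import Mathlib

section
/- Consider the charged-particle dynamics ẍ(t) = ẋ(t) × B(x(t)) + F(x(t)) with B(x) = (1/ε)B₀ + B₁(x), 0 < ε ≤ 1, with F globally Lipschitz continuous, B₁ smooth and bounded together with its derivatives (uniformly in ε), and initial data satisfying |x(0)| + |ẋ(0)| ≤ C₀. Let v_∥(t) = (B₀·ẋ(t))B₀ denote the component of the velocity parallel to B₀. Then there exists a constant C, independent of ε, such that |v_∥(t)| + |v̇_∥(t)| ≤ C for all t ∈ [0,T]. -/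
noncomputable section
set_option maxHeartbeats 1000000

open Real
open scoped RealInnerProductSpace

/-- ℝ³ as a Euclidean space. -/
abbrev E3 : Type := EuclideanSpace ℝ (Fin 3)

/-- Cross product on ℝ³. -/
def cross3 (a b : E3) : E3 :=
  (EuclideanSpace.equiv (Fin 3) ℝ).symm
    ![a 1 * b 2 - a 2 * b 1, a 2 * b 0 - a 0 * b 2, a 0 * b 1 - a 1 * b 0]

/-- `tanc ζ = tan ζ / ζ`, with value 1 at ζ = 0. -/
def tanc (z : ℝ) : ℝ := if z = 0 then 1 else Real.tan z / z

/-- `sinc ζ = sin ζ / ζ`, with value 1 at ζ = 0. -/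
def sinc3 (z : ℝ) : ℝ := if z = 0 then 1 else Real.sin z / z

/-- The filter matrix `Ψ = I + (1 − tanc θ) B̃₀²`, applied to a vector `v`
(here `B̃₀ w = B₀ × w`). -/
def psiF (θ : ℝ) (B₀ v : E3) : E3 := v + (1 - tanc θ) • cross3 B₀ (cross3 B₀ v)

/-- The filter matrix `Φ = I + (1 − sinc(θ)⁻¹) B̃₀²`, applied to a vector `v`. -/
def phiF (θ : ℝ) (B₀ v : E3) : E3 := v + (1 - (sinc3 θ)⁻¹) • cross3 B₀ (cross3 B₀ v)

/-- `A'(x)ᵀ v`: the transpose of the Jacobian of `A` at `x`, applied to `v`. -/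
def AT (A : E3 → E3) (x v : E3) : E3 := (ContinuousLinearMap.adjoint (fderiv ℝ A x)) v

/-- midpoint of two vectors -/
def mid (a b : E3) : E3 := (2:ℝ)⁻¹ • (a + b)

/-- curl of a vector field on ℝ³ -/
def curl3 (A : E3 → E3) (x : E3) : E3 :=
  (EuclideanSpace.equiv (Fin 3) ℝ).symm
    ![fderiv ℝ A x (EuclideanSpace.single 1 1) 2 - fderiv ℝ A x (EuclideanSpace.single 2 1) 1,
      fderiv ℝ A x (EuclideanSpace.single 2 1) 0 - fderiv ℝ A x (EuclideanSpace.single 0 1) 2,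
      fderiv ℝ A x (EuclideanSpace.single 0 1) 1 - fderiv ℝ A x (EuclideanSpace.single 1 1) 0]

/-- The two-step recurrence of the filtered variational integrator (FVI),
`x_{n+1} − 2x_n + x_{n−1} = Ψ( … )`, written with indices shifted by one. -/
def FVIstep (θ h : ℝ) (B₀ : E3) (A F : E3 → E3) (x : ℕ → E3) : Prop :=
  ∀ n : ℕ,
    x (n+2) - (2:ℝ) • x (n+1) + x n =
      psiF θ B₀
        ((h/2) • AT A (mid (x (n+1)) (x (n+2))) (x (n+2) - x (n+1))
          + (h/2) • AT A (mid (x n) (x (n+1))) (x (n+1) - x n)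
          - h • (A (mid (x (n+1)) (x (n+2))) - A (mid (x n) (x (n+1))))
          + (h^2/2) • (F (mid (x (n+1)) (x (n+2))) + F (mid (x n) (x (n+1)))))

/-- The defining relation for the starting value `x₁` of the FVI. -/
def FVIstart (θ h : ℝ) (B₀ : E3) (A F : E3 → E3) (p₀ : E3) (x : ℕ → E3) : Prop :=
  x 1 = x 0 + h • psiF θ B₀
    (p₀ + (2:ℝ)⁻¹ • AT A (mid (x 0) (x 1)) (x 1 - x 0)
      - A (mid (x 0) (x 1)) + (h/2) • F (mid (x 0) (x 1)))

/-- The velocity relation `(v_{n+1} + v_n)/2 = Φ (x_{n+1} − x_n)/h` of the FVI. -/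
def FVIvel (θ h : ℝ) (B₀ : E3) (x v : ℕ → E3) : Prop :=
  ∀ n : ℕ, (2:ℝ)⁻¹ • (v (n+1) + v n) = h⁻¹ • phiF θ B₀ (x (n+1) - x n)

/-- midpoint velocity `v_{n+1/2} = Φ (x_{n+1} − x_n)/h` -/
def vmid (θ h : ℝ) (B₀ : E3) (x : ℕ → E3) (n : ℕ) : E3 := h⁻¹ • phiF θ B₀ (x (n+1) - x n)

/-- orthogonal projection onto the span of `B₀` (for `‖B₀‖ = 1`) -/
def ppar (B₀ v : E3) : E3 := (inner ℝ B₀ v : ℝ) • B₀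

/-- the energy `H(x,v) = |v|²/2 + U(x)` -/
def energyH (U : E3 → ℝ) (x v : E3) : ℝ := ‖v‖^2/2 + U x

lemma inner3 (a b : E3) : ⟪a,b⟫ = a 0 * b 0 + a 1 * b 1 + a 2 * b 2 := by
  simp [PiLp.inner_apply, RCLike.inner_apply, Fin.sum_univ_three]
  ring

lemma cross3_c0 (a b : E3) : (cross3 a b) 0 = a 1 * b 2 - a 2 * b 1 := rfl
lemma cross3_c1 (a b : E3) : (cross3 a b) 1 = a 2 * b 0 - a 0 * b 2 := rfl
lemma cross3_c2 (a b : E3) : (cross3 a b) 2 = a 0 * b 1 - a 1 * b 0 := rfl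

lemma inner_cross_self (a b : E3) : ⟪a, cross3 a b⟫ = 0 := by
  rw [inner3, cross3_c0, cross3_c1, cross3_c2]; ring

lemma inner_cross_add_smul (c a b : E3) (r : ℝ) :
    ⟪c, cross3 a (r • c + b)⟫ = ⟪c, cross3 a b⟫ := by
  rw [inner3, inner3, cross3_c0, cross3_c1, cross3_c2, cross3_c0, cross3_c1, cross3_c2]
  simp only [PiLp.add_apply, PiLp.smul_apply, smul_eq_mul]
  ring

lemma coord_abs_le (a : E3) (i : Fin 3) : |a i| ≤ ‖a‖ := by
  rw [EuclideanSpace.norm_eq a]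
  have h1 : |a i| = Real.sqrt (‖a i‖^2) := by rw [Real.sqrt_sq_eq_abs]; simp
  rw [h1]
  exact Real.sqrt_le_sqrt (Finset.single_le_sum (f := fun j => ‖a j‖^2)
    (fun j _ => sq_nonneg _) (Finset.mem_univ i))

lemma inner_cross_bound (c a b : E3) : |⟪c, cross3 a b⟫| ≤ 6 * (‖c‖ * (‖a‖ * ‖b‖)) := by
  rw [inner3, cross3_c0, cross3_c1, cross3_c2]
  set M := ‖c‖ * (‖a‖ * ‖b‖) with hM
  have key : ∀ i j k : Fin 3, c i * (a j * b k) ≤ M ∧ -M ≤ c i * (a j * b k) := by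
    intro i j k
    have h : |c i * (a j * b k)| ≤ M := by
      rw [abs_mul, abs_mul]
      exact mul_le_mul (coord_abs_le c i)
        (mul_le_mul (coord_abs_le a j) (coord_abs_le b k) (abs_nonneg _) (norm_nonneg _))
        (by positivity) (norm_nonneg _)
    exact ⟨(le_abs_self _).trans h, by linarith [neg_abs_le (c i * (a j * b k))]⟩
  obtain ⟨p1, m1⟩ := key 0 1 2; obtain ⟨p2, m2⟩ := key 0 2 1
  obtain ⟨p3, m3⟩ := key 1 2 0; obtain ⟨p4, m4⟩ := key 1 0 2
  obtain ⟨p5, m5⟩ := key 2 0 1; obtain ⟨p6, m6⟩ := key 2 1 0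
  have e : c 0 * (a 1 * b 2 - a 2 * b 1) + c 1 * (a 2 * b 0 - a 0 * b 2) +
      c 2 * (a 0 * b 1 - a 1 * b 0) =
      c 0 * (a 1 * b 2) - c 0 * (a 2 * b 1) + c 1 * (a 2 * b 0) - c 1 * (a 0 * b 2)
      + c 2 * (a 0 * b 1) - c 2 * (a 1 * b 0) := by ring
  rw [e, abs_le]
  constructor <;> linarith

/-- ε-uniform bound on the parallel velocity.
With `F` globally Lipschitz, `B₁` smooth and bounded together with its derivative
(uniformly in ε), and `|x(0)| + |ẋ(0)| ≤ C₀`, the parallel velocity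
`v_∥(t) = (B₀·ẋ(t))B₀` and its time derivative are bounded on `[0,T]`
by a constant `C` independent of `ε`. -/
theorem stmt4
    (T C₀ : ℝ) (hT : 0 < T) (hC₀ : 0 < C₀)
    (L : NNReal) (F : E3 → E3) (hFLip : LipschitzWith L F)
    (B₁ : E3 → E3) (hB₁ : ContDiff ℝ (⊤ : ℕ∞) B₁)
    (hB₁bdd : ∀ y : E3, ‖B₁ y‖ + ‖fderiv ℝ B₁ y‖ ≤ C₀) :
    ∃ C > (0:ℝ), ∀ ε : ℝ, 0 < ε → ε ≤ 1 →
      ∀ B₀ : E3, ‖B₀‖ = 1 →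
      ∀ x : ℝ → E3, ContDiff ℝ 2 x →
        (∀ t ∈ Set.Icc (0:ℝ) T,
          deriv (deriv x) t = cross3 (deriv x t) (ε⁻¹ • B₀ + B₁ (x t)) + F (x t)) →
        ‖x 0‖ + ‖deriv x 0‖ ≤ C₀ →
        ∀ t ∈ Set.Icc (0:ℝ) T,
          ‖ppar B₀ (deriv x t)‖ + ‖deriv (fun s => ppar B₀ (deriv x s)) t‖ ≤ C := by
  set K : ℝ := 2 + (L:ℝ) + ‖F 0‖^2 with hKdef
  have hK0 : (0:ℝ) ≤ K := by positivity
  set D : ℝ := (C₀^2 + 1) * Real.exp (K * T) with hDdef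
  have hexp1 : (1:ℝ) ≤ Real.exp (K * T) := Real.one_le_exp (by positivity)
  have hD1 : (1:ℝ) ≤ D := by nlinarith [sq_nonneg C₀]
  set Cv : ℝ := Real.sqrt D with hCvdef
  have hCv0 : (0:ℝ) ≤ Cv := Real.sqrt_nonneg _
  refine ⟨Cv + (6 * (Cv * C₀) + (‖F 0‖ + (L:ℝ) * Cv)) + 1, by positivity, ?_⟩
  intro ε hε hε1 B₀ hB₀ x hx hode hinit t ht
  have hxd : Differentiable ℝ x := hx.differentiable (by norm_num)
  have hvC1 : ContDiff ℝ 1 (deriv x) := by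
    have h2 : ContDiff ℝ ((1:WithTop ℕ∞)+1) x := by
      rw [one_add_one_eq_two]; exact hx
    exact (contDiff_succ_iff_deriv.mp h2).2.2
  have hvd : Differentiable ℝ (deriv x) := hvC1.differentiable (by norm_num)
  set f : ℝ → ℝ := fun s => ⟪x s, x s⟫ + ⟪deriv x s, deriv x s⟫ + 1 with hfdef
  set f' : ℝ → ℝ := fun s => 2*⟪x s, deriv x s⟫ + 2*⟪deriv x s, F (x s)⟫ with hf'def
  have hfval : ∀ s, f s = ‖x s‖^2 + ‖deriv x s‖^2 + 1 := by
    intro s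
    simp only [hfdef, real_inner_self_eq_norm_sq]
  have hfd : Differentiable ℝ f :=
    ((hxd.inner ℝ hxd).add (hvd.inner ℝ hvd)).add_const 1
  have hFle : ∀ s : ℝ, ‖F (x s)‖ ≤ ‖F 0‖ + (L:ℝ) * ‖x s‖ := by
    intro s
    have h := hFLip.dist_le_mul (x s) 0
    rw [dist_eq_norm, dist_eq_norm, sub_zero] at h
    have h2 := norm_sub_norm_le (F (x s)) (F 0)
    linarith
  have hder : ∀ s ∈ Set.Ico (0:ℝ) T, HasDerivAt f (f' s) s := by
    intro s hs
    have h1 : HasDerivAt x (deriv x s) s := (hxd s).hasDerivAt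
    have h2 : HasDerivAt (deriv x) (deriv (deriv x) s) s := (hvd s).hasDerivAt
    have hxx := h1.inner ℝ h1
    have hvv := h2.inner ℝ h2
    have hode' := hode s ⟨hs.1, hs.2.le⟩
    have hva : ⟪deriv x s, deriv (deriv x) s⟫ = ⟪deriv x s, F (x s)⟫ := by
      rw [hode', inner_add_right, inner_cross_self, zero_add]
    have hall := (hxx.add hvv).add_const 1
    have c1 : ⟪deriv (deriv x) s, deriv x s⟫ = ⟪deriv x s, F (x s)⟫ := by
      rw [real_inner_comm]; exact hva
    have heq : (⟪x s, deriv x s⟫ + ⟪deriv x s, x s⟫) +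
        (⟪deriv x s, deriv (deriv x) s⟫ + ⟪deriv (deriv x) s, deriv x s⟫) = f' s := by
      simp only [hf'def]
      rw [hva, c1]
      linarith [real_inner_comm (x s) (deriv x s)]
    rw [heq] at hall
    exact hall
  have hbound : ∀ s ∈ Set.Ico (0:ℝ) T, ‖f' s‖ ≤ K * ‖f s‖ + 0 := by
    intro s _
    have hpos : 0 < f s := by
      rw [hfval s]; positivity
    have hfs : ‖f s‖ = ‖x s‖^2 + ‖deriv x s‖^2 + 1 := by
      rw [Real.norm_eq_abs, abs_of_pos hpos, hfval s]
    rw [hfs, Real.norm_eq_abs, add_zero]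
    have i1 : |(⟪x s, deriv x s⟫:ℝ)| ≤ ‖x s‖ * ‖deriv x s‖ := abs_real_inner_le_norm _ _
    have i2 : |(⟪deriv x s, F (x s)⟫:ℝ)| ≤ ‖deriv x s‖ * ‖F (x s)‖ := abs_real_inner_le_norm _ _
    have hF := hFle s
    have habs : |f' s| ≤ 2*(‖x s‖ * ‖deriv x s‖) + 2*(‖deriv x s‖ * ‖F (x s)‖) := by
      simp only [hf'def]
      calc |2*⟪x s, deriv x s⟫ + 2*⟪deriv x s, F (x s)⟫|
          ≤ |2*(⟪x s, deriv x s⟫:ℝ)| + |2*(⟪deriv x s, F (x s)⟫:ℝ)| := abs_add_le _ _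
        _ ≤ 2*(‖x s‖ * ‖deriv x s‖) + 2*(‖deriv x s‖ * ‖F (x s)‖) := by
            rw [abs_mul, abs_mul]
            simp only [abs_two]
            gcongr
    have hL0 : (0:ℝ) ≤ (L:ℝ) := L.coe_nonneg
    have hFx0 : (0:ℝ) ≤ ‖F (x s)‖ := norm_nonneg _
    have hvn0 : (0:ℝ) ≤ ‖deriv x s‖ := norm_nonneg _
    have hxn0 : (0:ℝ) ≤ ‖x s‖ := norm_nonneg _
    have key : 2*(‖x s‖ * ‖deriv x s‖) + 2*(‖deriv x s‖ * (‖F 0‖ + (L:ℝ) * ‖x s‖))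
        ≤ K * (‖x s‖^2 + ‖deriv x s‖^2 + 1) := by
      rw [hKdef]
      nlinarith [sq_nonneg (‖x s‖ - ‖deriv x s‖), sq_nonneg (‖deriv x s‖ - ‖F 0‖),
        mul_nonneg hL0 (sq_nonneg (‖x s‖ - ‖deriv x s‖)),
        mul_nonneg (sq_nonneg ‖F 0‖) (add_nonneg (sq_nonneg ‖x s‖) (sq_nonneg ‖deriv x s‖)),
        mul_nonneg hL0 (add_nonneg (sq_nonneg ‖x s‖) (sq_nonneg ‖deriv x s‖))]
    have hmono : 2*(‖deriv x s‖ * ‖F (x s)‖) ≤ 2*(‖deriv x s‖ * (‖F 0‖ + (L:ℝ) * ‖x s‖)) := by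
      gcongr
    linarith
  have hf0 : ‖f 0‖ ≤ C₀^2 + 1 := by
    have hpos : 0 < f 0 := by rw [hfval 0]; positivity
    rw [Real.norm_eq_abs, abs_of_pos hpos, hfval 0]
    nlinarith [norm_nonneg (x 0), norm_nonneg (deriv x 0)]
  have hgron := norm_le_gronwallBound_of_norm_deriv_right_le (a := 0) (b := T) (ε := 0)
    hfd.continuous.continuousOn (fun s hs => (hder s hs).hasDerivWithinAt) hf0 hbound
  have hft := hgron t ht
  rw [gronwallBound_ε0, sub_zero] at hft
  have hftD : f t ≤ D := by
    have h1 : Real.exp (K * t) ≤ Real.exp (K * T) :=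
      Real.exp_le_exp.mpr (mul_le_mul_of_nonneg_left ht.2 hK0)
    have h2 : (0:ℝ) ≤ C₀^2 + 1 := by positivity
    calc f t ≤ ‖f t‖ := le_abs_self _
      _ ≤ (C₀^2 + 1) * Real.exp (K * t) := hft
      _ ≤ (C₀^2 + 1) * Real.exp (K * T) := by gcongr
      _ = D := hDdef.symm
  have hψ : ‖x t‖^2 + ‖deriv x t‖^2 + 1 ≤ D := by rw [← hfval t]; exact hftD
  have hvt : ‖deriv x t‖ ≤ Cv := by
    rw [hCvdef]
    have h : ‖deriv x t‖^2 ≤ D := by nlinarith [sq_nonneg ‖x t‖]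
    calc ‖deriv x t‖ = Real.sqrt (‖deriv x t‖^2) := (Real.sqrt_sq (norm_nonneg _)).symm
      _ ≤ Real.sqrt D := Real.sqrt_le_sqrt h
  -- Term 1
  have ht1 : ‖ppar B₀ (deriv x t)‖ ≤ Cv := by
    rw [ppar, norm_smul, hB₀, mul_one, Real.norm_eq_abs]
    calc |(⟪B₀, deriv x t⟫:ℝ)| ≤ ‖B₀‖ * ‖deriv x t‖ := abs_real_inner_le_norm _ _
      _ = ‖deriv x t‖ := by rw [hB₀, one_mul]
      _ ≤ Cv := hvt
  -- Term 2
  have h2 : HasDerivAt (deriv x) (deriv (deriv x) t) t := (hvd t).hasDerivAt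
  have hppd : HasDerivAt (fun s => ppar B₀ (deriv x s))
      ((⟪B₀, deriv (deriv x) t⟫:ℝ) • B₀) t := by
    have hc : HasDerivAt (fun _ : ℝ => B₀) 0 t := hasDerivAt_const t B₀
    have hI := (hc.inner ℝ h2).smul_const B₀
    simp only [inner_zero_left, add_zero] at hI
    simpa only [ppar] using hI
  have hode' := hode t ht
  have hval : (⟪B₀, deriv (deriv x) t⟫:ℝ) =
      ⟪B₀, cross3 (deriv x t) (B₁ (x t))⟫ + ⟪B₀, F (x t)⟫ := by
    rw [hode', inner_add_right]
    congr 1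
    exact inner_cross_add_smul B₀ (deriv x t) (B₁ (x t)) ε⁻¹
  have hB1b : ‖B₁ (x t)‖ ≤ C₀ := by
    have := hB₁bdd (x t)
    have := norm_nonneg (fderiv ℝ B₁ (x t))
    linarith
  have ht2 : ‖deriv (fun s => ppar B₀ (deriv x s)) t‖ ≤
      6 * (Cv * C₀) + (‖F 0‖ + (L:ℝ) * Cv) := by
    rw [hppd.deriv, norm_smul, hB₀, mul_one, Real.norm_eq_abs, hval]
    have i1 : |(⟪B₀, cross3 (deriv x t) (B₁ (x t))⟫:ℝ)| ≤
        6 * (‖B₀‖ * (‖deriv x t‖ * ‖B₁ (x t)‖)) := inner_cross_bound _ _ _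
    rw [hB₀, one_mul] at i1
    have i2 : |(⟪B₀, F (x t)⟫:ℝ)| ≤ ‖F (x t)‖ := by
      have := abs_real_inner_le_norm B₀ (F (x t))
      rw [hB₀, one_mul] at this
      exact this
    have hF := hFle t
    have hxt : ‖x t‖ ≤ Cv := by
      rw [hCvdef]
      have h : ‖x t‖^2 ≤ D := by nlinarith [sq_nonneg ‖deriv x t‖]
      calc ‖x t‖ = Real.sqrt (‖x t‖^2) := (Real.sqrt_sq (norm_nonneg _)).symm
        _ ≤ Real.sqrt D := Real.sqrt_le_sqrt h
    have hL0 : (0:ℝ) ≤ (L:ℝ) := L.coe_nonneg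
    have hcb : ‖deriv x t‖ * ‖B₁ (x t)‖ ≤ Cv * C₀ :=
      mul_le_mul hvt hB1b (norm_nonneg _) hCv0
    have hFb : ‖F (x t)‖ ≤ ‖F 0‖ + (L:ℝ) * Cv := by
      have : (L:ℝ) * ‖x t‖ ≤ (L:ℝ) * Cv := mul_le_mul_of_nonneg_left hxt hL0
      linarith
    calc |(⟪B₀, cross3 (deriv x t) (B₁ (x t))⟫:ℝ) + ⟪B₀, F (x t)⟫|
        ≤ |(⟪B₀, cross3 (deriv x t) (B₁ (x t))⟫:ℝ)| + |(⟪B₀, F (x t)⟫:ℝ)| := abs_add_le _ _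
      _ ≤ 6 * (Cv * C₀) + (‖F 0‖ + (L:ℝ) * Cv) := by
          have : 6 * (‖deriv x t‖ * ‖B₁ (x t)‖) ≤ 6 * (Cv * C₀) := by linarith
          linarith
  linarith
end
end

section
/- (Noether conservation of momentum.) Let S be a skew-symmetric 3×3 real matrix, U: ℝ³ → ℝ and A: ℝ³ → ℝ³ continuously differentiable, and assume the invariance conditions U(e^{τS}x) = U(x) and e^{−τS}A(e^{τS}x) = A(x) for all τ ∈ ℝ and all x ∈ ℝ³. Let x: [0,T] → ℝ³ be a twice differentiable solution of ẍ(t) = ẋ(t) × B(x(t)) − ∇U(x(t)) with B = ∇×A. Then the momentum M(x(t), ẋ(t)) = (ẋ(t) + A(x(t)))ᵀ S x(t) is constant on [0,T]. -/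
noncomputable section

open scoped RealInnerProductSpace

/-!
Differentiating the invariance conditions at `τ = 0` gives `DU(y)(Sy) = 0` and
`DA(y)(Sy) = S A(y)`. Along a solution, `d/dt ⟪ẋ + A(x), Sx⟫ = ⟪ẋ + A(x), Sẋ⟫ + ⟪ẍ + DA(x)ẋ, Sx⟫`.
Inserting the equation of motion, the Lorentz term is `⟪ẋ × curl A, Sx⟫ = ⟪DA(Sx), ẋ⟫ − ⟪DA ẋ, Sx⟫`,
the potential term is `DU(x)(Sx) = 0`, and skew-symmetry of `S` cancels the rest.
-/

open NormedSpace

section Flow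

variable {E F : Type*} [NormedAddCommGroup E] [NormedSpace ℝ E] [CompleteSpace E]
  [NormedAddCommGroup F] [NormedSpace ℝ F] [CompleteSpace F]

theorem hasDerivAt_exp_smul_apply_zero (S : E →L[ℝ] E) (y : E) :
    HasDerivAt (fun τ : ℝ => exp (τ • S) y) (S y) 0 := by
  simpa using (hasDerivAt_exp_smul_const (𝕂 := ℝ) S 0).clm_apply (hasDerivAt_const 0 y)

theorem exp_smul_apply_exp_neg_smul_apply (S : E →L[ℝ] E) (τ : ℝ) (z : E) :
    exp (τ • S) (exp ((-τ) • S) z) = z := by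
  have hinv : exp (τ • S) * exp ((-τ) • S) = 1 := by
    rw [← exp_add_of_commute_of_mem_ball (𝕂 := ℝ)
      (((Commute.refl S).smul_left τ).smul_right (-τ)) (by simp [expSeries_radius_eq_top])
      (by simp [expSeries_radius_eq_top]), ← add_smul, add_neg_cancel, zero_smul, exp_zero]
  exact congrArg (fun L : E →L[ℝ] E => L z) hinv

theorem fderiv_apply_generator_of_equivariant (S : E →L[ℝ] E) (T : F →L[ℝ] F) {f : E → F}
    {y : E} (hf : DifferentiableAt ℝ f y)
    (hfST : ∀ τ : ℝ, f (exp (τ • S) y) = exp (τ • T) (f y)) :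
    fderiv ℝ f y (S y) = T (f y) := by
  have horbit : HasDerivAt (fun τ : ℝ => f (exp (τ • S) y)) (fderiv ℝ f y (S y)) 0 :=
    hf.hasFDerivAt.comp_hasDerivAt_of_eq 0 (hasDerivAt_exp_smul_apply_zero S y) (by simp)
  simp only [hfST] at horbit
  exact horbit.unique (hasDerivAt_exp_smul_apply_zero T (f y))

theorem fderiv_apply_generator_eq_zero_of_invariant (S : E →L[ℝ] E) {f : E → ℝ} {y : E}
    (hf : DifferentiableAt ℝ f y) (hfS : ∀ τ : ℝ, f (exp (τ • S) y) = f y) :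
    fderiv ℝ f y (S y) = 0 :=
  fderiv_apply_generator_of_equivariant S 0 hf (by simp [hfS])

theorem fderiv_apply_generator_of_conj_invariant (S : E →L[ℝ] E) {f : E → E} {y : E}
    (hf : DifferentiableAt ℝ f y)
    (hfS : ∀ τ : ℝ, exp ((-τ) • S) (f (exp (τ • S) y)) = f y) :
    fderiv ℝ f y (S y) = S (f y) :=
  fderiv_apply_generator_of_equivariant S S hf fun τ => by
    rw [← hfS τ, exp_smul_apply_exp_neg_smul_apply]

end Flow

section Momentum

variable {E : Type*} [NormedAddCommGroup E] [InnerProductSpace ℝ E]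

def momentum (A : E → E) (S : E →L[ℝ] E) (y v : E) : ℝ := ⟪v + A y, S y⟫

theorem hasDerivAt_momentum (S : E →L[ℝ] E) {A : E → E} {y v : ℝ → E} {y' v' : E}
    {t : ℝ} (hA : DifferentiableAt ℝ A (y t)) (hy : HasDerivAt y y' t) (hv : HasDerivAt v v' t) :
    HasDerivAt (fun s => momentum A S (y s) (v s))
      (⟪v t + A (y t), S y'⟫ + ⟪v' + fderiv ℝ A (y t) y', S (y t)⟫) t :=
  (hv.add (hA.hasFDerivAt.comp_hasDerivAt t hy)).inner ℝ (S.hasFDerivAt.comp_hasDerivAt t hy)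

end Momentum

theorem inner_cross3_curl3 (A : E3 → E3) (y v w : E3) :
    ⟪cross3 v (curl3 A y), w⟫ = ⟪fderiv ℝ A y w, v⟫ - ⟪fderiv ℝ A y v, w⟫ := by
  have hbasis : ∀ u : E3, u = u 0 • EuclideanSpace.single 0 1
      + u 1 • EuclideanSpace.single 1 1 + u 2 • EuclideanSpace.single 2 1 := fun u => by
    ext i
    fin_cases i <;> simp
  rw [hbasis w, hbasis v]
  simp only [map_add, map_smul, inner_add_left, inner_add_right, inner_smul_left,
    inner_smul_right, cross3, curl3, PiLp.inner_apply, Fin.sum_univ_three, PiLp.add_apply,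
    PiLp.smul_apply, PiLp.single_apply, PiLp.continuousLinearEquiv_symm_apply, Matrix.cons_val,
    Matrix.cons_val_one, Matrix.cons_val_zero, RCLike.inner_apply, Real.ringHom_apply,
    Fin.isValue, ↓reduceIte, one_ne_zero, zero_ne_one, Fin.reduceEq, smul_eq_mul, mul_zero,
    mul_one, zero_mul, one_mul, zero_add, add_zero]
  ring

-- The left side is the rate of change of `momentum A S` along a solution (`hasDerivAt_momentum`).
theorem momentum_rate_eq_zero (S : E3 →L[ℝ] E3)
    (hSskew : ∀ a b : E3, ⟪S a, b⟫ = -⟪a, S b⟫)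
    (U : E3 → ℝ) (A : E3 → E3) (y v : E3) (hU : fderiv ℝ U y (S y) = 0)
    (hA : fderiv ℝ A y (S y) = S (A y)) :
    ⟪v + A y, S v⟫ + ⟪cross3 v (curl3 A y) - gradient U y + fderiv ℝ A y v, S y⟫ = 0 := by
  have hv : ⟪v, S v⟫ = 0 := by
    have := hSskew v v
    rw [real_inner_comm] at this
    linarith
  rw [inner_add_left, inner_add_left, inner_sub_left, inner_cross3_curl3, inner_gradient_left, hA,
    hSskew, hU, hv]
  ring

theorem stmt13_general
    (T : ℝ)
    (S : E3 →L[ℝ] E3) (hSskew : ∀ a b : E3, ⟪S a, b⟫ = -⟪a, S b⟫)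
    (U : E3 → ℝ) (hU : ContDiff ℝ 1 U)
    (A : E3 → E3) (hA : ContDiff ℝ 1 A)
    (hUinv : ∀ τ : ℝ, ∀ y : E3, U (NormedSpace.exp (τ • S) y) = U y)
    (hAinv : ∀ τ : ℝ, ∀ y : E3,
      NormedSpace.exp ((-τ) • S) (A (NormedSpace.exp (τ • S) y)) = A y)
    (x : ℝ → E3)
    (hx1 : Differentiable ℝ x) (hx2 : Differentiable ℝ (deriv x))
    (hode : ∀ t ∈ Set.Icc (0:ℝ) T,
      deriv (deriv x) t = cross3 (deriv x t) (curl3 A (x t)) - gradient U (x t)) :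
    ∀ t ∈ Set.Icc (0:ℝ) T,
      ⟪deriv x t + A (x t), S (x t)⟫ = ⟪deriv x 0 + A (x 0), S (x 0)⟫ := by
  have hUd := hU.differentiable one_ne_zero
  have hAd := hA.differentiable one_ne_zero
  have hcont : Continuous fun s => momentum A S (x s) (deriv x s) :=
    (hx2.continuous.add (hA.continuous.comp hx1.continuous)).inner
      (S.continuous.comp hx1.continuous)
  refine constant_of_has_deriv_right_zero hcont.continuousOn fun s hs => ?_
  have hrate := hasDerivAt_momentum S (hAd (x s)) (hx1 s).hasDerivAt (hx2 s).hasDerivAt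
  rw [hode s (Set.Ico_subset_Icc_self hs),
    momentum_rate_eq_zero S hSskew U A (x s) (deriv x s)
      (fderiv_apply_generator_eq_zero_of_invariant S (hUd (x s)) (hUinv · (x s)))
      (fderiv_apply_generator_of_conj_invariant S (hAd (x s)) (hAinv · (x s)))] at hrate
  exact hrate.hasDerivWithinAt

/-- Noether conservation of momentum.  Let `S` be skew-symmetric,
`U`, `A` be `C¹` with `U(e^{τS}x) = U(x)` and `e^{−τS}A(e^{τS}x) = A(x)` for all `τ, x`.
If `x` is a twice differentiable solution of `ẍ = ẋ × (∇×A)(x) − ∇U(x)` on `[0,T]`,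
then the momentum `M(x,ẋ) = (ẋ + A(x))ᵀ S x` is constant on `[0,T]`. -/
theorem stmt13
    (T : ℝ) (hT : 0 < T)
    (S : E3 →L[ℝ] E3) (hSskew : ∀ a b : E3, ⟪S a, b⟫ = -⟪a, S b⟫)
    (U : E3 → ℝ) (hU : ContDiff ℝ 1 U)
    (A : E3 → E3) (hA : ContDiff ℝ 1 A)
    (hUinv : ∀ τ : ℝ, ∀ y : E3, U (NormedSpace.exp (τ • S) y) = U y)
    (hAinv : ∀ τ : ℝ, ∀ y : E3,
      NormedSpace.exp ((-τ) • S) (A (NormedSpace.exp (τ • S) y)) = A y)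
    (x : ℝ → E3)
    (hx1 : Differentiable ℝ x) (hx2 : Differentiable ℝ (deriv x))
    (hode : ∀ t ∈ Set.Icc (0:ℝ) T,
      deriv (deriv x) t = cross3 (deriv x t) (curl3 A (x t)) - gradient U (x t)) :
    ∀ t ∈ Set.Icc (0:ℝ) T,
      ⟪deriv x t + A (x t), S (x t)⟫ = ⟪deriv x 0 + A (x 0), S (x 0)⟫ :=
  stmt13_general T S hSskew U hU A hA hUinv hAinv x hx1 hx2 hode
end
end

section
/- (Local truncation error of the filtered two-step variational integrator, ε = 1.) Let ε = 1, let A ∈ C⁴(ℝ³, ℝ³), F ∈ C³(ℝ³, ℝ³), and let x: [0,T] → ℝ³ be a five times continuously differentiable solution of ẍ(t) = ẋ(t) × B(x(t)) + F(x(t)) with B = ∇×A. For step size h > 0 and t_n = nh with t_{n−1}, t_{n+1} ∈ [0,T], define the defect Δ_n := x(t_{n+1}) − 2x(t_n) + x(t_{n−1}) − Ψ( (h/2)A'(X₊)ᵀ(x(t_{n+1}) − x(t_n)) + (h/2)A'(X₋)ᵀ(x(t_n) − x(t_{n−1})) − h(A(X₊) − A(X₋)) + (h²/2)(F(X₊)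 + F(X₋)) ), where X_± := (x(t_n) + x(t_{n±1}))/2 and Ψ = I + (1 − tanc(h/2))B̃₀². Then there exist constants C > 0 and h₀ > 0 such that |Δ_n| ≤ C h⁴ for all 0 < h ≤ h₀ and all admissible n. -/
noncomputable section

open Real
open scoped RealInnerProductSpace

/-!
Insert the exact solution into the scheme and expand everything around the half-step points
`t ± h/2`. Writing `p = A'(x)ᵀẋ`, `q = A ∘ x` and `G = F ∘ x`, the identity
`v × (∇ × A) = (A'ᵀ − A')v` turns the equation of motion into `ẍ = p − q̇ + G`. Taylor expansion
shows that the bracket `S` to which `Ψ` is applied equals `h² (p − q̇ + G)(t) + O(h⁴)`, while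
`x(t + h) − 2x(t) + x(t − h) = h² ẍ(t) + O(h⁴)`. Since `S = O(h²)` and
`1 − tanc(h/2) = O(h²)`, the filter contributes only `O(h⁴)` as well.

All estimates are uniform big-O statements along a filter: for the theorem, `𝓝 0 ×ˢ 𝓟 [0, T]`
on pairs `(h, t)`, so that the constants do not depend on the time `t = nh`.
-/

open Asymptotics Filter Topology

section Taylor

variable {E : Type*} [NormedAddCommGroup E] [NormedSpace ℝ E]

lemma norm_le_of_norm_deriv_le_pow {g g' : ℝ → E} {K b : ℝ} {k : ℕ}
    (hg : ∀ u ∈ Set.uIcc 0 b, HasDerivAt g (g' u) u) (hg0 : g 0 = 0)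
    (hg' : ∀ u ∈ Set.uIcc 0 b, ‖g' u‖ ≤ K * |u| ^ k) :
    ‖g b‖ ≤ K * |b| ^ (k + 1) / (k + 1) := by
  wlog hb : 0 ≤ b generalizing g g' b
  · have hmem : ∀ u ∈ Set.uIcc 0 (-b), -u ∈ Set.uIcc 0 b := fun u hu => by
      rw [Set.uIcc_of_le (by linarith)] at hu
      rw [Set.uIcc_of_ge (by linarith)]
      exact ⟨by linarith [hu.2], by linarith [hu.1]⟩
    simpa using this (g := fun u => g (-u)) (g' := fun u => -g' (-u)) (b := -b)
      (fun u hu => by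
        simpa [Function.comp_def] using (hg (-u) (hmem u hu)).scomp u (hasDerivAt_neg u))
      (by simpa using hg0) (fun u hu => by simpa using hg' (-u) (hmem u hu)) (by linarith)
  rw [Set.uIcc_of_le hb] at hg hg'
  have hB : ∀ u : ℝ, HasDerivAt (fun u => K * u ^ (k + 1) / (k + 1)) (K * u ^ k) u := by
    intro u
    refine (((hasDerivAt_pow (k + 1) u).const_mul K).div_const ((k : ℝ) + 1)).congr_deriv ?_
    push_cast [Nat.add_sub_cancel]
    field_simp
  have := image_norm_le_of_norm_deriv_right_le_deriv_boundary
    (fun u hu => (hg u hu).continuousAt.continuousWithinAt)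
    (fun u hu => (hg u (Set.Ico_subset_Icc_self hu)).hasDerivWithinAt)
    (by simp [hg0]) hB
    (fun u hu => by simpa [abs_of_nonneg hu.1] using hg' u (Set.Ico_subset_Icc_self hu))
    (Set.right_mem_Icc.2 hb)
  simpa [abs_of_nonneg hb] using this

lemma norm_sub_taylor_le {f : ℝ → E} (k : ℕ) (hf : ContDiff ℝ k f) {s δ M : ℝ}
    (hM : ∀ u ∈ Set.uIcc s (s + δ), ‖iteratedDeriv k f u‖ ≤ M) :
    ‖f (s + δ) - ∑ j ∈ Finset.range k, (δ ^ j / j.factorial) • iteratedDeriv j f s‖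
      ≤ M * |δ| ^ k / k.factorial := by
  induction k generalizing f δ with
  | zero => simpa using hM (s + δ) Set.right_mem_uIcc
  | succ k ih =>
    obtain ⟨hdiff, -, hf'⟩ := contDiff_succ_iff_deriv.1 (by exact_mod_cast hf :
      ContDiff ℝ ((k : WithTop ℕ∞) + 1) f)
    set P : ℝ → E := fun u => ∑ j ∈ Finset.range k,
      (u ^ (j + 1) / (j + 1).factorial) • iteratedDeriv j (deriv f) s with hP
    have hsum : ∀ u : ℝ, ∑ j ∈ Finset.range (k + 1), (u ^ j / j.factorial) • iteratedDeriv j f s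
        = P u + f s := fun u => by
      simp [Finset.sum_range_succ', hP, iteratedDeriv_succ']
    have hPderiv : ∀ u : ℝ, HasDerivAt P (∑ j ∈ Finset.range k,
        (u ^ j / j.factorial) • iteratedDeriv j (deriv f) s) u := fun u => by
      refine HasDerivAt.fun_sum fun j _ => ?_
      convert ((hasDerivAt_pow (j + 1) u).div_const ((j + 1).factorial : ℝ)).smul_const
        (iteratedDeriv j (deriv f) s) using 2
      push_cast [Nat.factorial_succ]
      field_simp
    have key := norm_le_of_norm_deriv_le_pow (K := M / k.factorial) (k := k) (b := δ)
      (g := fun u => f (s + u) - (P u + f s))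
      (fun u _ => ((hdiff (s + u)).hasDerivAt.comp_const_add s u).sub ((hPderiv u).add_const _))
      (by simp [hP]) (fun u hu => by
        have hsub : Set.uIcc s (s + u) ⊆ Set.uIcc s (s + δ) :=
          Set.uIcc_subset_uIcc Set.left_mem_uIcc (by
            have := Set.mem_image_of_mem (fun w => s + w) hu
            rwa [Set.image_const_add_uIcc, add_zero] at this)
        have := ih hf' (δ := u) fun w hw => by
          rw [← iteratedDeriv_succ']
          exact hM w (hsub hw)
        rwa [mul_div_right_comm] at this)
    rw [hsum]
    convert key using 1
    push_cast [Nat.factorial_succ]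
    field_simp

end Taylor

section BigO

variable {α : Type*} {l : Filter α}

lemma exists_eventually_norm_le {E : Type*} [Norm E] {u : α → E}
    (hu : u =O[l] fun _ => (1 : ℝ)) : ∃ R, ∀ᶠ a in l, ‖u a‖ ≤ R := by
  obtain ⟨R, hR⟩ := hu.bound
  exact ⟨R, by simpa using hR⟩

lemma exists_eventually_mem_closedBall {E : Type*} [SeminormedAddCommGroup E] {u v : α → E}
    (hu : u =O[l] fun _ => (1 : ℝ)) (hv : v =O[l] fun _ => (1 : ℝ)) :
    ∃ R, ∀ᶠ a in l, u a ∈ Metric.closedBall 0 R ∧ v a ∈ Metric.closedBall 0 R := by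
  obtain ⟨R₁, h₁⟩ := exists_eventually_norm_le hu
  obtain ⟨R₂, h₂⟩ := exists_eventually_norm_le hv
  refine ⟨max R₁ R₂, ?_⟩
  filter_upwards [h₁, h₂] with a ha₁ ha₂
  simp only [mem_closedBall_zero_iff]
  exact ⟨ha₁.trans (le_max_left _ _), ha₂.trans (le_max_right _ _)⟩

lemma Filter.Tendsto.isBigO_pow_pow {h : α → ℝ} (hh : Tendsto h l (𝓝 0)) {m n : ℕ}
    (hmn : m ≤ n) : (fun a => h a ^ n) =O[l] fun a => h a ^ m := by
  refine IsBigO.of_bound 1 ?_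
  filter_upwards [hh.eventually (Metric.closedBall_mem_nhds 0 one_pos)] with a ha
  simp only [dist_zero_right] at ha
  simp only [norm_pow, one_mul]
  exact pow_le_pow_of_le_one (norm_nonneg _) ha hmn

lemma isBigO_div_const_self (f : α → ℝ) (c : ℝ) : (fun a => f a / c) =O[l] f :=
  (isBigO_const_mul_self c⁻¹ f l).congr_left fun a => by rw [div_eq_inv_mul]

lemma isBigO_div_const_pow (h : α → ℝ) (c : ℝ) (k : ℕ) :
    (fun a => (h a / c) ^ k) =O[l] fun a => h a ^ k :=
  (isBigO_div_const_self (fun a => h a ^ k) (c ^ k)).congr_left fun a => by rw [div_pow]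

namespace Asymptotics

variable {E F : Type*} [NormedAddCommGroup E] [NormedSpace ℝ E] [NormedAddCommGroup F]
  [NormedSpace ℝ F]

lemma IsBigO.smul_isBigO_one {k g : α → ℝ} {v : α → E} (hk : k =O[l] g)
    (hv : v =O[l] fun _ => (1 : ℝ)) : (fun a => k a • v a) =O[l] g :=
  (hk.smul hv).congr_right fun a => by simp

lemma IsBigO.smul_pow {h k : α → ℝ} {v : α → E} {m n : ℕ} (hk : k =O[l] fun a => h a ^ m)
    (hv : v =O[l] fun a => h a ^ n) : (fun a => k a • v a) =O[l] fun a => h a ^ (m + n) :=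
  (hk.smul hv).congr_right fun a => by rw [smul_eq_mul, pow_add]

lemma IsBigO.clm_apply {L : α → E →L[ℝ] F} {v : α → E} {f g : α → ℝ}
    (hL : L =O[l] f) (hv : v =O[l] g) : (fun a => L a (v a)) =O[l] fun a => f a * g a :=
  isBoundedBilinearMap_apply.isBigO_comp.trans (hL.norm_left.mul hv.norm_left)

end Asymptotics

variable {E F : Type*} [NormedAddCommGroup E] [ProperSpace E] [NormedAddCommGroup F]
  {u v : α → E}

lemma Continuous.comp_isBigO_one {g : E → F} (hg : Continuous g)
    (hu : u =O[l] fun _ => (1 : ℝ)) : (fun a => g (u a)) =O[l] fun _ => (1 : ℝ) := by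
  obtain ⟨R, hR⟩ := exists_eventually_norm_le hu
  obtain ⟨M, hM⟩ := (isCompact_closedBall (0 : E) R).exists_bound_of_continuousOn hg.continuousOn
  refine IsBigO.of_bound M ?_
  filter_upwards [hR] with a ha
  simpa using hM (u a) (mem_closedBall_zero_iff.2 ha)

variable [NormedSpace ℝ E] [NormedSpace ℝ F]

lemma ContDiff.isBigO_comp_sub_comp {g : E → F} (hg : ContDiff ℝ 1 g)
    (hu : u =O[l] fun _ => (1 : ℝ)) (hv : v =O[l] fun _ => (1 : ℝ)) :
    (fun a => g (u a) - g (v a)) =O[l] fun a => u a - v a := by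
  obtain ⟨R, hR⟩ := exists_eventually_mem_closedBall hu hv
  obtain ⟨M, hM⟩ := (isCompact_closedBall (0 : E) R).exists_bound_of_continuousOn
    (hg.continuous_fderiv one_ne_zero).continuousOn
  refine IsBigO.of_bound M ?_
  filter_upwards [hR] with a ha
  exact (convex_closedBall 0 R).norm_image_sub_le_of_norm_fderiv_le
    (fun w _ => (hg.differentiable one_ne_zero) w) hM ha.2 ha.1

lemma ContDiff.isBigO_comp_sub_comp_sub_fderiv {g : E → F} (hg : ContDiff ℝ 2 g)
    (hu : u =O[l] fun _ => (1 : ℝ)) (hv : v =O[l] fun _ => (1 : ℝ)) :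
    (fun a => g (u a) - g (v a) - fderiv ℝ g (v a) (u a - v a))
      =O[l] fun a => ‖u a - v a‖ ^ 2 := by
  obtain ⟨R, hR⟩ := exists_eventually_mem_closedBall hu hv
  have hg' : ContDiff ℝ 1 (fderiv ℝ g) := hg.fderiv_right (by norm_num)
  obtain ⟨M, hM⟩ := (isCompact_closedBall (0 : E) R).exists_bound_of_continuousOn
    (hg'.continuous_fderiv one_ne_zero).continuousOn
  have hball := convex_closedBall (0 : E) R
  refine IsBigO.of_bound M ?_
  filter_upwards [hR] with a ha
  have hM₀ : 0 ≤ M := (norm_nonneg _).trans (hM _ ha.2)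
  -- along the segment `[v, u]` the derivative of `g` moves by at most `M ‖u - v‖`
  have := (convex_segment (v a) (u a)).norm_image_sub_le_of_norm_fderiv_le'
    (φ := fderiv ℝ g (v a)) (C := M * ‖u a - v a‖)
    (fun w _ => (hg.differentiable two_ne_zero) w) (fun w hw =>
      (hball.norm_image_sub_le_of_norm_fderiv_le (fun w _ => (hg'.differentiable one_ne_zero) w)
        hM ha.2 (hball.segment_subset ha.2 ha.1 hw)).trans
      (mul_le_mul_of_nonneg_left (norm_sub_le_of_mem_segment hw) hM₀))
    (left_mem_segment ℝ _ _) (right_mem_segment ℝ _ _)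
  simpa [sq, mul_assoc] using this

end BigO

section TaylorAsymptotics

variable {α : Type*} {l : Filter α} {E : Type*} [NormedAddCommGroup E] [NormedSpace ℝ E]
  {f : ℝ → E} {s δ : α → ℝ}

lemma isBigO_taylor_remainder {k : ℕ} (hf : ContDiff ℝ k f) (hs : s =O[l] fun _ => (1 : ℝ))
    (hδ : Tendsto δ l (𝓝 0)) :
    (fun a => f (s a + δ a)
        - ∑ j ∈ Finset.range k, (δ a ^ j / j.factorial) • iteratedDeriv j f (s a))
      =O[l] fun a => δ a ^ k := by
  obtain ⟨R, hR⟩ := exists_eventually_norm_le hs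
  obtain ⟨M, hM⟩ := (isCompact_closedBall (0 : ℝ) (R + 1)).exists_bound_of_continuousOn
    (hf.continuous_iteratedDeriv k le_rfl).continuousOn
  refine IsBigO.of_bound (M / k.factorial) ?_
  filter_upwards [hR, hδ.eventually (Metric.closedBall_mem_nhds 0 one_pos)] with a hsa hδa
  refine (norm_sub_taylor_le k hf fun u hu => hM u ?_).trans (le_of_eq ?_)
  · have := Set.abs_sub_left_of_mem_uIcc hu
    simp only [Metric.mem_closedBall, dist_zero_right, Real.norm_eq_abs, add_sub_cancel_left]
      at this hsa hδa ⊢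
    calc |u| ≤ |s a| + |u - s a| := by simpa using abs_add_le (s a) (u - s a)
      _ ≤ R + 1 := by linarith
  · simp [norm_pow]
    ring

lemma isBigO_taylor_remainder_sub {k : ℕ} (hf : ContDiff ℝ k f)
    (hs : s =O[l] fun _ => (1 : ℝ)) (hδ : Tendsto δ l (𝓝 0)) :
    (fun a => f (s a - δ a)
        - ∑ j ∈ Finset.range k, ((-δ a) ^ j / j.factorial) • iteratedDeriv j f (s a))
      =O[l] fun a => δ a ^ k := by
  have := isBigO_taylor_remainder hf hs (by simpa using hδ.neg)
  simp only [← sub_eq_add_neg] at this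
  exact this.trans (isBigO_of_le l fun a => by simp [norm_pow])

lemma isBigO_central_difference_sub_deriv (hf : ContDiff ℝ 3 f)
    (hs : s =O[l] fun _ => (1 : ℝ)) (hδ : Tendsto δ l (𝓝 0)) :
    (fun a => f (s a + δ a) - f (s a - δ a) - (2 * δ a) • deriv f (s a))
      =O[l] fun a => δ a ^ 3 := by
  refine ((isBigO_taylor_remainder hf hs hδ).sub
    (isBigO_taylor_remainder_sub hf hs hδ)).congr_left fun a => ?_
  simp [Finset.sum_range_succ, Nat.factorial]
  module

lemma isBigO_second_difference (hf : ContDiff ℝ 2 f) (hs : s =O[l] fun _ => (1 : ℝ))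
    (hδ : Tendsto δ l (𝓝 0)) :
    (fun a => f (s a + δ a) - (2 : ℝ) • f (s a) + f (s a - δ a)) =O[l] fun a => δ a ^ 2 := by
  refine ((isBigO_taylor_remainder hf hs hδ).add
    (isBigO_taylor_remainder_sub hf hs hδ)).congr_left fun a => ?_
  simp [Finset.sum_range_succ, Nat.factorial]
  module

lemma isBigO_second_difference_sub_iteratedDeriv (hf : ContDiff ℝ 4 f)
    (hs : s =O[l] fun _ => (1 : ℝ)) (hδ : Tendsto δ l (𝓝 0)) :
    (fun a => f (s a + δ a) - (2 : ℝ) • f (s a) + f (s a - δ a)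
        - δ a ^ 2 • iteratedDeriv 2 f (s a)) =O[l] fun a => δ a ^ 4 := by
  refine ((isBigO_taylor_remainder hf hs hδ).add
    (isBigO_taylor_remainder_sub hf hs hδ)).congr_left fun a => ?_
  simp [Finset.sum_range_succ, Nat.factorial]
  module

end TaylorAsymptotics

section VectorCalculus

lemma norm_sq_e3 (v : E3) : ‖v‖ ^ 2 = v 0 ^ 2 + v 1 ^ 2 + v 2 ^ 2 := by
  rw [EuclideanSpace.norm_eq, Real.sq_sqrt (by positivity)]
  simp [Fin.sum_univ_three, sq_abs]

lemma cross3_apply (a b : E3) (i : Fin 3) :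
    cross3 a b i = ![a 1 * b 2 - a 2 * b 1, a 2 * b 0 - a 0 * b 2, a 0 * b 1 - a 1 * b 0] i :=
  rfl

lemma norm_cross3_le (a b : E3) : ‖cross3 a b‖ ≤ ‖a‖ * ‖b‖ := by
  refine le_of_pow_le_pow_left₀ two_ne_zero (by positivity) ?_
  rw [mul_pow, norm_sq_e3, norm_sq_e3, norm_sq_e3]
  simp only [cross3_apply, Matrix.cons_val_zero, Matrix.cons_val_one, Matrix.cons_val_two,
    Matrix.head_cons, Matrix.tail_cons]
  nlinarith [sq_nonneg (a 0 * b 0 + a 1 * b 1 + a 2 * b 2)]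

lemma adjoint_apply_eq (L : E3 →L[ℝ] E3) (v : E3) (i : Fin 3) :
    ContinuousLinearMap.adjoint L v i = ∑ j, v j * L (EuclideanSpace.single i 1) j := by
  have h : ContinuousLinearMap.adjoint L v i
      = ⟪ContinuousLinearMap.adjoint L v, EuclideanSpace.single i 1⟫ := by
    simp [EuclideanSpace.inner_single_right]
  rw [h, ContinuousLinearMap.adjoint_inner_left, PiLp.inner_apply]
  simp [mul_comm]

lemma clm_apply_eq (L : E3 →L[ℝ] E3) (v : E3) (i : Fin 3) :
    L v i = ∑ j, v j * L (EuclideanSpace.single j 1) i := by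
  conv_lhs => rw [← (EuclideanSpace.basisFun (Fin 3) ℝ).sum_repr v]
  simp [map_sum, map_smul]

lemma cross3_curl3 (A : E3 → E3) (y v : E3) :
    cross3 v (curl3 A y) = AT A y v - fderiv ℝ A y v := by
  ext i
  rw [PiLp.sub_apply, AT, adjoint_apply_eq, clm_apply_eq]
  fin_cases i <;> simp [cross3, curl3, Fin.sum_univ_three] <;> ring

lemma iteratedDeriv_two_eq_of_ode {A F : E3 → E3} {x : ℝ → E3} (hA : Differentiable ℝ A)
    (hx : Differentiable ℝ x) {t : ℝ}
    (hode : deriv (deriv x) t = cross3 (deriv x t) (curl3 A (x t)) + F (x t)) :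
    iteratedDeriv 2 x t = AT A (x t) (deriv x t) - deriv (fun s => A (x s)) t + F (x t) := by
  rw [iteratedDeriv_succ, iteratedDeriv_one, hode, cross3_curl3,
    show (fun s => A (x s)) = A ∘ x from rfl, fderiv_comp_deriv t (hA _) (hx t)]

/-- Over `ℝ` the conjugate-linear isometry `adjoint` is linear; Mazur–Ulam repackages it as an
`ℝ`-linear isometry equivalence. -/
lemma contDiff_adjoint {n : WithTop ℕ∞} :
    ContDiff ℝ n fun L : E3 →L[ℝ] E3 => ContinuousLinearMap.adjoint L :=
  ((ContinuousLinearMap.adjoint (𝕜 := ℝ) (E := E3) (F := E3)).toIsometryEquiv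
    |>.toRealLinearIsometryEquivOfMapZero (map_zero ContinuousLinearMap.adjoint)).contDiff

lemma Asymptotics.IsBigO.adjoint_apply {α : Type*} {l : Filter α} {L : α → E3 →L[ℝ] E3}
    {v : α → E3} {f g : α → ℝ} (hL : L =O[l] f) (hv : v =O[l] g) :
    (fun a => ContinuousLinearMap.adjoint (L a) (v a)) =O[l] fun a => f a * g a :=
  IsBigO.clm_apply ((isBigO_of_le l fun a => by rw [LinearIsometryEquiv.norm_map]).trans hL) hv

end VectorCalculus

section Tanc

lemma tanc_neg (z : ℝ) : tanc (-z) = tanc z := by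
  simp [tanc, Real.tan_neg, neg_div_neg_eq]

lemma abs_tanc_sub_one_le {z : ℝ} (hz : |z| ≤ 1 / 2) : |tanc z - 1| ≤ z ^ 2 := by
  wlog hz₀ : 0 < z generalizing z
  · rcases (not_lt.1 hz₀).eq_or_lt with rfl | hneg
    · simp [tanc]
    · simpa [tanc_neg] using this (z := -z) (by rwa [abs_neg]) (by linarith)
  rw [abs_of_pos hz₀] at hz
  have hcos₂ := Real.one_sub_sq_div_two_le_cos (x := z)
  have hcos : 7 / 8 ≤ Real.cos z := by nlinarith
  have hsin : z - z ^ 3 / 4 ≤ Real.sin z := by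
    nlinarith [Real.sin_gt_sub_cube hz₀, pow_pos hz₀ 3]
  have htan : |Real.tan z - z| ≤ z ^ 3 := by
    rw [Real.tan_eq_sin_div_cos, div_sub' (by linarith), abs_div,
      abs_of_pos (by linarith : 0 < Real.cos z), div_le_iff₀ (by linarith), abs_le]
    constructor <;> nlinarith [Real.sin_le hz₀.le, Real.cos_le_one z, pow_pos hz₀ 3,
      mul_le_mul_of_nonneg_left hcos₂ hz₀.le, mul_le_mul_of_nonneg_left hcos (pow_pos hz₀ 3).le]
  rw [tanc, if_neg hz₀.ne', show Real.tan z / z - 1 = (Real.tan z - z) / z by field_simp,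
    abs_div, abs_of_pos hz₀, div_le_iff₀ hz₀]
  linarith [show z ^ 2 * z = z ^ 3 by ring]

lemma isBigO_tanc_sub_one : (fun z => tanc z - 1) =O[𝓝 0] fun z => z ^ 2 :=
  IsBigO.of_bound 1 <| by
    filter_upwards [Metric.closedBall_mem_nhds (0 : ℝ) (by norm_num : (0 : ℝ) < 1 / 2)] with z hz
    simpa [abs_of_nonneg (sq_nonneg z)] using abs_tanc_sub_one_le (by simpa using hz)

end Tanc

section HalfStep

variable {α : Type*} {l : Filter α} {x : ℝ → E3} {h t : α → ℝ}

lemma isBigO_one_add_div (ht : t =O[l] fun _ => (1 : ℝ)) (hh : Tendsto h l (𝓝 0)) (c : ℝ) :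
    (fun a => t a + h a / c) =O[l] fun _ => (1 : ℝ) :=
  ht.add ((hh.div_const c).isBigO_one ℝ)

lemma isBigO_one_mid (hx : Continuous x) (ht : t =O[l] fun _ => (1 : ℝ))
    (hh : Tendsto h l (𝓝 0)) :
    (fun a => mid (x (t a)) (x (t a + h a))) =O[l] fun _ => (1 : ℝ) :=
  (((hx.comp_isBigO_one ht).add (hx.comp_isBigO_one (ht.add (hh.isBigO_one ℝ)))).const_smul_left
    (2 : ℝ)⁻¹).congr_left fun _ => rfl

lemma isBigO_step (hx : ContDiff ℝ 1 x) (ht : t =O[l] fun _ => (1 : ℝ))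
    (hh : Tendsto h l (𝓝 0)) :
    (fun a => x (t a + h a) - x (t a)) =O[l] h :=
  (hx.isBigO_comp_sub_comp (ht.add (hh.isBigO_one ℝ)) ht).congr_right fun a => by simp

lemma isBigO_step_sub_deriv_mid (hx : ContDiff ℝ 3 x) (ht : t =O[l] fun _ => (1 : ℝ))
    (hh : Tendsto h l (𝓝 0)) :
    (fun a => x (t a + h a) - x (t a) - h a • deriv x (t a + h a / 2))
      =O[l] fun a => h a ^ 3 := by
  have := isBigO_central_difference_sub_deriv hx (isBigO_one_add_div ht hh 2)
    (by simpa using hh.div_const 2)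
  simp only [add_assoc, add_halves, add_sub_cancel_right, mul_div_cancel₀ _ (two_ne_zero' ℝ)]
    at this
  exact this.trans (isBigO_div_const_pow h 2 3)

lemma isBigO_mid_sub_sub (hx : ContDiff ℝ 4 x) (ht : t =O[l] fun _ => (1 : ℝ))
    (hh : Tendsto h l (𝓝 0)) :
    (fun a => mid (x (t a)) (x (t a + h a)) - x (t a + h a / 2)
        - (h a ^ 2 / 8) • iteratedDeriv 2 x (t a + h a / 2)) =O[l] fun a => h a ^ 4 := by
  have := isBigO_second_difference_sub_iteratedDeriv hx (isBigO_one_add_div ht hh 2)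
    (by simpa using hh.div_const 2)
  simp only [add_assoc, add_halves, add_sub_cancel_right] at this
  refine ((this.const_smul_left (2 : ℝ)⁻¹).trans (isBigO_div_const_pow h 2 4)).congr_left
    fun a => ?_
  rw [Pi.smul_apply, mid]
  module

lemma isBigO_mid_sub (hx : ContDiff ℝ 4 x) (ht : t =O[l] fun _ => (1 : ℝ))
    (hh : Tendsto h l (𝓝 0)) :
    (fun a => mid (x (t a)) (x (t a + h a)) - x (t a + h a / 2)) =O[l] fun a => h a ^ 2 := by
  have hx₂ : (fun a => iteratedDeriv 2 x (t a + h a / 2)) =O[l] fun _ => (1 : ℝ) :=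
    (hx.continuous_iteratedDeriv 2 (by norm_num)).comp_isBigO_one (isBigO_one_add_div ht hh 2)
  exact (((isBigO_mid_sub_sub hx ht hh).trans (hh.isBigO_pow_pow (by norm_num))).add
    ((isBigO_div_const_self (fun a => h a ^ 2) 8).smul_isBigO_one hx₂)).congr_left
    fun a => by abel

variable {A : E3 → E3}

lemma isBigO_halfStep_AT (hA : ContDiff ℝ 2 A) (hx : ContDiff ℝ 4 x)
    (ht : t =O[l] fun _ => (1 : ℝ)) (hh : Tendsto h l (𝓝 0)) :
    (fun a => (h a / 2) • AT A (mid (x (t a)) (x (t a + h a))) (x (t a + h a) - x (t a))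
        - (h a ^ 2 / 2) • AT A (x (t a + h a / 2)) (deriv x (t a + h a / 2)))
      =O[l] fun a => h a ^ 4 := by
  have hxs := hx.continuous.comp_isBigO_one (isBigO_one_add_div ht hh 2)
  have hA' : ContDiff ℝ 1 (fderiv ℝ A) := hA.fderiv_right (by norm_num)
  have hdA : (fun a => fderiv ℝ A (mid (x (t a)) (x (t a + h a)))
      - fderiv ℝ A (x (t a + h a / 2))) =O[l] fun a => h a ^ 2 :=
    (hA'.isBigO_comp_sub_comp (isBigO_one_mid hx.continuous ht hh) hxs).trans
      (isBigO_mid_sub hx ht hh)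
  have key := ((hdA.adjoint_apply (isBigO_step (hx.of_le (by norm_num)) ht hh)).congr_right
    (fun a => by ring : ∀ a, h a ^ 2 * h a = h a ^ 3)).add
    (((hA'.continuous.comp_isBigO_one hxs).adjoint_apply
      (isBigO_step_sub_deriv_mid (hx.of_le (by norm_num)) ht hh)).congr_right fun a => one_mul _)
  refine (((isBigO_div_const_self h 2).smul key).congr_right fun a => by
    rw [smul_eq_mul]; ring).congr_left fun a => ?_
  simp only [AT, map_sub, sub_apply, map_smul]
  module

lemma isBigO_halfStep_A (hA : ContDiff ℝ 2 A) (hx : ContDiff ℝ 4 x)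
    (ht : t =O[l] fun _ => (1 : ℝ)) (hh : Tendsto h l (𝓝 0)) :
    (fun a => A (mid (x (t a)) (x (t a + h a))) - A (x (t a + h a / 2))
        - (h a ^ 2 / 8) • fderiv ℝ A (x (t a + h a / 2)) (iteratedDeriv 2 x (t a + h a / 2)))
      =O[l] fun a => h a ^ 3 := by
  have hxs := hx.continuous.comp_isBigO_one (isBigO_one_add_div ht hh 2)
  have hquad := (hA.isBigO_comp_sub_comp_sub_fderiv (isBigO_one_mid hx.continuous ht hh)
    hxs).trans (((isBigO_mid_sub hx ht hh).norm_norm.pow 2).trans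
      (isBigO_of_le l (g := fun a => h a ^ 4) fun a => le_of_eq (by simp [← pow_mul])))
  have hlin := ((hA.continuous_fderiv (by norm_num)).comp_isBigO_one hxs).clm_apply
    (isBigO_mid_sub_sub hx ht hh)
  refine ((hquad.trans (hh.isBigO_pow_pow (by norm_num))).add
    ((hlin.congr_right fun a => one_mul _).trans (hh.isBigO_pow_pow (by norm_num)))).congr_left
    fun a => ?_
  simp only [map_sub, map_smul]
  abel

lemma isBigO_halfStep_F {F : E3 → E3} (hF : ContDiff ℝ 1 F) (hx : ContDiff ℝ 4 x)
    (ht : t =O[l] fun _ => (1 : ℝ)) (hh : Tendsto h l (𝓝 0)) :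
    (fun a => F (mid (x (t a)) (x (t a + h a))) - F (x (t a + h a / 2))) =O[l]
      fun a => h a ^ 2 :=
  (hF.isBigO_comp_sub_comp (isBigO_one_mid hx.continuous ht hh)
    (hx.continuous.comp_isBigO_one (isBigO_one_add_div ht hh 2))).trans (isBigO_mid_sub hx ht hh)

end HalfStep

/-- The vector to which `Ψ` is applied in the two-step scheme, for `y₀, y₁, y₂ = x_{n-1}, x_n,
x_{n+1}`. -/
def fviRhs (A F : E3 → E3) (h : ℝ) (y₀ y₁ y₂ : E3) : E3 :=
  (h / 2) • AT A (mid y₁ y₂) (y₂ - y₁) + (h / 2) • AT A (mid y₀ y₁) (y₁ - y₀)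
    - h • (A (mid y₁ y₂) - A (mid y₀ y₁)) + (h ^ 2 / 2) • (F (mid y₁ y₂) + F (mid y₀ y₁))

section Defect

variable {α : Type*} {l : Filter α} {x : ℝ → E3} {A F : E3 → E3} {h t : α → ℝ}

lemma isBigO_AT_terms (hA : ContDiff ℝ 3 A) (hx : ContDiff ℝ 4 x)
    (ht : t =O[l] fun _ => (1 : ℝ)) (hh : Tendsto h l (𝓝 0)) :
    (fun a => (h a / 2) • AT A (mid (x (t a)) (x (t a + h a))) (x (t a + h a) - x (t a))
      + (h a / 2) • AT A (mid (x (t a - h a)) (x (t a))) (x (t a) - x (t a - h a))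
      - h a ^ 2 • AT A (x (t a)) (deriv x (t a))) =O[l] fun a => h a ^ 4 := by
  have hp : ContDiff ℝ 2 fun s => AT A (x s) (deriv x s) :=
    (contDiff_adjoint.comp ((hA.fderiv_right (m := 2) (by norm_num)).comp
      (hx.of_le (by norm_num)))).clm_apply ((hx.deriv' (n := 3)).of_le (by norm_num))
  have hR := isBigO_halfStep_AT (hA.of_le (by norm_num)) hx ht hh
  -- the left half step `[t - h, t]` is the right half step based at `t - h`
  have hL := isBigO_halfStep_AT (hA.of_le (by norm_num)) hx (ht.sub (hh.isBigO_one ℝ)) hh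
  simp only [sub_add_cancel, sub_add, sub_half] at hL
  have hmid := (isBigO_second_difference hp ht (by simpa using hh.div_const 2)).trans
    (isBigO_div_const_pow h 2 2)
  refine ((hR.add hL).add ((isBigO_div_const_self (fun a => h a ^ 2) 2).smul_pow hmid)).congr_left
    fun a => ?_
  module

lemma isBigO_A_terms (hA : ContDiff ℝ 3 A) (hx : ContDiff ℝ 4 x)
    (ht : t =O[l] fun _ => (1 : ℝ)) (hh : Tendsto h l (𝓝 0)) :
    (fun a => A (mid (x (t a)) (x (t a + h a))) - A (mid (x (t a - h a)) (x (t a)))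
      - h a • deriv (fun s => A (x s)) (t a)) =O[l] fun a => h a ^ 3 := by
  have hγ : ContDiff ℝ 1 fun s => fderiv ℝ A (x s) (iteratedDeriv 2 x s) :=
    ((hA.fderiv_right (m := 2) (by norm_num)).comp (hx.of_le (by norm_num))).of_le
      (by norm_num) |>.clm_apply (by
        rw [iteratedDeriv_eq_iterate]
        exact ContDiff.iterate_deriv' 1 2 (hx.of_le (by norm_num)))
  have hR := isBigO_halfStep_A (hA.of_le (by norm_num)) hx ht hh
  have hL := isBigO_halfStep_A (hA.of_le (by norm_num)) hx (ht.sub (hh.isBigO_one ℝ)) hh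
  simp only [sub_add_cancel, sub_add, sub_half] at hL
  have hq := (isBigO_central_difference_sub_deriv (f := fun s => A (x s))
    (hA.comp (hx.of_le (by norm_num))) ht (by simpa using hh.div_const 2)).trans
    (isBigO_div_const_pow h 2 3)
  -- the `h²/8`-corrections of the two half steps differ by `O(h³)` because `hγ` is `C¹`
  have hγ' := (hγ.isBigO_comp_sub_comp (isBigO_one_add_div ht hh 2)
    (ht.sub ((hh.div_const 2).isBigO_one ℝ))).congr_right (g₂ := fun a => h a ^ 1)
    fun a => by ring
  refine (((hR.sub hL).add hq).add
    ((isBigO_div_const_self (fun a => h a ^ 2) 8).smul_pow hγ')).congr_left fun a => ?_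
  simp only [mul_div_cancel₀ _ (two_ne_zero' ℝ)]
  module

lemma isBigO_F_terms (hF : ContDiff ℝ 2 F) (hx : ContDiff ℝ 4 x)
    (ht : t =O[l] fun _ => (1 : ℝ)) (hh : Tendsto h l (𝓝 0)) :
    (fun a => F (mid (x (t a)) (x (t a + h a))) + F (mid (x (t a - h a)) (x (t a)))
      - (2 : ℝ) • F (x (t a))) =O[l] fun a => h a ^ 2 := by
  have hR := isBigO_halfStep_F (hF.of_le (by norm_num)) hx ht hh
  have hL := isBigO_halfStep_F (hF.of_le (by norm_num)) hx (ht.sub (hh.isBigO_one ℝ)) hh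
  simp only [sub_add_cancel, sub_add, sub_half] at hL
  have hG := (isBigO_second_difference (f := fun s => F (x s))
    (hF.comp (hx.of_le (by norm_num))) ht (by simpa using hh.div_const 2)).trans
    (isBigO_div_const_pow h 2 2)
  refine ((hR.add hL).add hG).congr_left fun a => ?_
  module

lemma isBigO_fviRhs_sub (hA : ContDiff ℝ 3 A) (hF : ContDiff ℝ 2 F) (hx : ContDiff ℝ 4 x)
    (ht : t =O[l] fun _ => (1 : ℝ)) (hh : Tendsto h l (𝓝 0)) :
    (fun a => fviRhs A F (h a) (x (t a - h a)) (x (t a)) (x (t a + h a))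
      - h a ^ 2 • (AT A (x (t a)) (deriv x (t a)) - deriv (fun s => A (x s)) (t a)
        + F (x (t a)))) =O[l] fun a => h a ^ 4 := by
  refine (((isBigO_AT_terms hA hx ht hh).sub
    (((isBigO_refl h l).congr_right fun a => (pow_one _).symm).smul_pow
      (isBigO_A_terms hA hx ht hh))).add
    ((isBigO_div_const_self (l := l) (fun a => h a ^ 2) 2).smul_pow
      (isBigO_F_terms hF hx ht hh))).congr_left fun a => ?_
  simp only [fviRhs]
  module

lemma isBigO_fviDefect {B₀ : E3} (hA : ContDiff ℝ 3 A) (hF : ContDiff ℝ 2 F)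
    (hx : ContDiff ℝ 4 x) (ht : t =O[l] fun _ => (1 : ℝ)) (hh : Tendsto h l (𝓝 0))
    (hode : ∀ᶠ a in l, iteratedDeriv 2 x (t a)
      = AT A (x (t a)) (deriv x (t a)) - deriv (fun s => A (x s)) (t a) + F (x (t a))) :
    (fun a => x (t a + h a) - (2 : ℝ) • x (t a) + x (t a - h a)
      - psiF (h a / 2) B₀ (fviRhs A F (h a) (x (t a - h a)) (x (t a)) (x (t a + h a))))
      =O[l] fun a => h a ^ 4 := by
  have hD := isBigO_second_difference_sub_iteratedDeriv hx ht hh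
  have hR := isBigO_fviRhs_sub hA hF hx ht hh
  have hS : (fun a => fviRhs A F (h a) (x (t a - h a)) (x (t a)) (x (t a + h a)))
      =O[l] fun a => h a ^ 2 :=
    ((hR.trans (hh.isBigO_pow_pow (by norm_num))).add
      ((isBigO_refl (fun a => h a ^ 2) l).smul_isBigO_one
        ((hx.continuous_iteratedDeriv 2 (by norm_num)).comp_isBigO_one ht))).congr'
      (hode.mono fun a ha => by simp only [ha]; abel) EventuallyEq.rfl
  have htanc : (fun a => 1 - tanc (h a / 2)) =O[l] fun a => h a ^ 2 :=
    ((isBigO_tanc_sub_one.comp_tendsto (by simpa using hh.div_const 2)).neg_left.trans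
      (isBigO_div_const_pow h 2 2)).congr_left fun a => by simp
  have hcross : (fun a => cross3 B₀ (cross3 B₀
      (fviRhs A F (h a) (x (t a - h a)) (x (t a)) (x (t a + h a))))) =O[l] fun a => h a ^ 2 :=
    (IsBigO.of_bound (‖B₀‖ * ‖B₀‖) (Eventually.of_forall fun a =>
      (norm_cross3_le _ _).trans (by
        rw [mul_assoc]; gcongr; exact norm_cross3_le _ _))).trans hS
  refine ((hD.sub hR).sub (htanc.smul_pow hcross)).congr'
    (hode.mono fun a ha => ?_) EventuallyEq.rfl
  simp only [psiF, ha]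
  abel

end Defect

lemma exists_bound_of_isBigO_nhds_zero_prod {E : Type*} [Norm E] {f : ℝ × ℝ → E} {K : Set ℝ}
    {k : ℕ} (hf : f =O[𝓝 0 ×ˢ 𝓟 K] fun p => p.1 ^ k) :
    ∃ C > 0, ∃ h₀ > 0, ∀ h : ℝ, 0 < h → h ≤ h₀ → ∀ t ∈ K, ‖f (h, t)‖ ≤ C * h ^ k := by
  obtain ⟨C, hC, hCf⟩ := hf.exists_pos
  obtain ⟨ε, hε, hball⟩ := Metric.eventually_nhds_iff.1 (eventually_prod_principal_iff.1 hCf.bound)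
  refine ⟨C, hC, ε / 2, half_pos hε, fun h hh hhε t ht => ?_⟩
  have := hball (by rw [Real.dist_0_eq_abs, abs_of_pos hh]; linarith) t ht
  rwa [norm_pow, Real.norm_eq_abs, abs_of_pos hh] at this

theorem stmt19_general
    (T : ℝ)
    (B₀ : E3)
    (A F : E3 → E3) (hA : ContDiff ℝ 4 A) (hF : ContDiff ℝ 3 F)
    (x : ℝ → E3) (hx : ContDiff ℝ 5 x)
    (hode : ∀ t ∈ Set.Icc (0:ℝ) T,
      deriv (deriv x) t = cross3 (deriv x t) (curl3 A (x t)) + F (x t)) :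
    ∃ C > (0:ℝ), ∃ h₀ > (0:ℝ),
      ∀ h : ℝ, 0 < h → h ≤ h₀ →
      ∀ n : ℕ, 1 ≤ n → ((n:ℝ) + 1) * h ≤ T →
        ‖x (((n:ℝ) + 1) * h) - (2:ℝ) • x ((n:ℝ) * h) + x (((n:ℝ) - 1) * h)
          - psiF (h/2) B₀
              ((h/2) • AT A (mid (x ((n:ℝ) * h)) (x (((n:ℝ) + 1) * h)))
                  (x (((n:ℝ) + 1) * h) - x ((n:ℝ) * h))
                + (h/2) • AT A (mid (x (((n:ℝ) - 1) * h)) (x ((n:ℝ) * h)))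
                  (x ((n:ℝ) * h) - x (((n:ℝ) - 1) * h))
                - h • (A (mid (x ((n:ℝ) * h)) (x (((n:ℝ) + 1) * h)))
                    - A (mid (x (((n:ℝ) - 1) * h)) (x ((n:ℝ) * h))))
                + (h^2/2) • (F (mid (x ((n:ℝ) * h)) (x (((n:ℝ) + 1) * h)))
                    + F (mid (x (((n:ℝ) - 1) * h)) (x ((n:ℝ) * h)))))‖
          ≤ C * h^4 := by
  have hsnd : (Prod.snd : ℝ × ℝ → ℝ) =O[𝓝 0 ×ˢ 𝓟 (Set.Icc 0 T)] fun _ => (1 : ℝ) :=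
    IsBigO.of_bound T (eventually_prod_principal_iff.2 (Eventually.of_forall fun _ t ht => by
      simpa [abs_of_nonneg ht.1] using ht.2))
  obtain ⟨C, hC, h₀, hh₀, hbound⟩ := exists_bound_of_isBigO_nhds_zero_prod
    (isBigO_fviDefect (B₀ := B₀) (hA.of_le (by norm_num)) (hF.of_le (by norm_num))
      (hx.of_le (by norm_num)) hsnd tendsto_fst
      (eventually_prod_principal_iff.2 (Eventually.of_forall fun _ t ht =>
        iteratedDeriv_two_eq_of_ode (hA.differentiable (by norm_num))
          (hx.differentiable (by norm_num)) (hode t ht))))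
  refine ⟨C, hC, h₀, hh₀, fun h hh hhh₀ n _ hnT => ?_⟩
  rw [show ((n : ℝ) + 1) * h = n * h + h by ring, show ((n : ℝ) - 1) * h = n * h - h by ring]
  exact hbound h hh hhh₀ _ ⟨by positivity, by nlinarith⟩

/-- local truncation error of the FVI, ε = 1.  For
`A ∈ C⁴`, `F ∈ C³` and a `C⁵` solution `x` of `ẍ = ẋ × (∇×A)(x) + F(x)` on `[0,T]`,
the defect obtained by inserting the exact solution into the filtered two-step
scheme is of size `O(h⁴)`. -/
theorem stmt19
    (T : ℝ) (hT : 0 < T)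
    (B₀ : E3) (hB₀ : ‖B₀‖ = 1)
    (A F : E3 → E3) (hA : ContDiff ℝ 4 A) (hF : ContDiff ℝ 3 F)
    (x : ℝ → E3) (hx : ContDiff ℝ 5 x)
    (hode : ∀ t ∈ Set.Icc (0:ℝ) T,
      deriv (deriv x) t = cross3 (deriv x t) (curl3 A (x t)) + F (x t)) :
    ∃ C > (0:ℝ), ∃ h₀ > (0:ℝ),
      ∀ h : ℝ, 0 < h → h ≤ h₀ →
      ∀ n : ℕ, 1 ≤ n → ((n:ℝ) + 1) * h ≤ T →
        ‖x (((n:ℝ) + 1) * h) - (2:ℝ) • x ((n:ℝ) * h) + x (((n:ℝ) - 1) * h)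
          - psiF (h/2) B₀
              ((h/2) • AT A (mid (x ((n:ℝ) * h)) (x (((n:ℝ) + 1) * h)))
                  (x (((n:ℝ) + 1) * h) - x ((n:ℝ) * h))
                + (h/2) • AT A (mid (x (((n:ℝ) - 1) * h)) (x ((n:ℝ) * h)))
                  (x ((n:ℝ) * h) - x (((n:ℝ) - 1) * h))
                - h • (A (mid (x ((n:ℝ) * h)) (x (((n:ℝ) + 1) * h)))
                    - A (mid (x (((n:ℝ) - 1) * h)) (x ((n:ℝ) * h))))
                + (h^2/2) • (F (mid (x ((n:ℝ) * h)) (x (((n:ℝ) + 1) * h)))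
                    + F (mid (x (((n:ℝ) - 1) * h)) (x ((n:ℝ) * h)))))‖
          ≤ C * h^4 :=
  stmt19_general T B₀ A F hA hF x hx hode
end
end
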